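/- If L* + R derives Π → A, where R is a finite set of Buszkowski rules, then there exists a finite subset B of G_R such that !L* derives !B, Π → A, where !B is the sequence of formulae !B₁,…,!Bₙ for B = {B₁,…,Bₙ}. -/
import Mathlib


/-- Formulae (types) of the Lambek calculus with a modality:
`var` = primitive type, `div B A` = B / A, `ldiv A B` = A \ B, `bang A` = !A. -/
inductive Fm : Type
  | var : ℕ → Fm
  | div : Fm → Fm → Fm
  | ldiv : Fm → Fm → Fm
  | bang : Fm → Fm
  deriving DecidableEq

open Fm

/-- A Buszkowski rule: either (B₁) "from Φ₁ → p and Φ₂ → q derive Φ₁, Φ₂ → r"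
or (B₂) "from Φ, q → p derive Φ → r", for fixed variables p, q, r. -/
inductive BRule : Type
  | b1 (p q r : ℕ)
  | b2 (p q r : ℕ)
  deriving DecidableEq

/-- L* + R: the Lambek calculus L* (empty antecedents allowed) extended with
a finite set R of Buszkowski rules. -/
inductive LStarR (R : Finset BRule) : List Fm → Fm → Prop
  | ax (A : Fm) : LStarR R [A] A
  | divL (Γ Δ₁ Δ₂ : List Fm) (A B C : Fm) :
      LStarR R Γ A → LStarR R (Δ₁ ++ B :: Δ₂) C →
      LStarR R (Δ₁ ++ div B A :: (Γ ++ Δ₂)) C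
  | divR (Γ : List Fm) (A B : Fm) :
      LStarR R (Γ ++ [A]) B → LStarR R Γ (div B A)
  | ldivL (Γ Δ₁ Δ₂ : List Fm) (A B C : Fm) :
      LStarR R Γ A → LStarR R (Δ₁ ++ B :: Δ₂) C →
      LStarR R (Δ₁ ++ Γ ++ ldiv A B :: Δ₂) C
  | ldivR (Γ : List Fm) (A B : Fm) :
      LStarR R (A :: Γ) B → LStarR R Γ (ldiv A B)
  | b1 (p q r : ℕ) (Φ₁ Φ₂ : List Fm) :
      BRule.b1 p q r ∈ R → LStarR R Φ₁ (var p) → LStarR R Φ₂ (var q) →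
      LStarR R (Φ₁ ++ Φ₂) (var r)
  | b2 (p q r : ℕ) (Φ : List Fm) :
      BRule.b2 p q r ∈ R → LStarR R (Φ ++ [var q]) (var p) →
      LStarR R Φ (var r)

/-- The calculus !L*: the Lambek calculus L* (with empty antecedents allowed)
extended with a relevant modality `!` with rules (!→), (→!), (perm₁), (perm₂), (contr). -/
inductive BangL : List Fm → Fm → Prop
  | ax (A : Fm) : BangL [A] A
  | divL (Γ Δ₁ Δ₂ : List Fm) (A B C : Fm) :
      BangL Γ A → BangL (Δ₁ ++ B :: Δ₂) C →
      BangL (Δ₁ ++ div B A :: (Γ ++ Δ₂)) C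
  | divR (Γ : List Fm) (A B : Fm) :
      BangL (Γ ++ [A]) B → BangL Γ (div B A)
  | ldivL (Γ Δ₁ Δ₂ : List Fm) (A B C : Fm) :
      BangL Γ A → BangL (Δ₁ ++ B :: Δ₂) C →
      BangL (Δ₁ ++ Γ ++ ldiv A B :: Δ₂) C
  | ldivR (Γ : List Fm) (A B : Fm) :
      BangL (A :: Γ) B → BangL Γ (ldiv A B)
  | bangL (Γ₁ Γ₂ : List Fm) (A C : Fm) :
      BangL (Γ₁ ++ A :: Γ₂) C → BangL (Γ₁ ++ bang A :: Γ₂) C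
  | bangR (Γ : List Fm) (B : Fm) :
      BangL (Γ.map bang) B → BangL (Γ.map bang) (bang B)
  | perm1 (Δ₁ Γ Δ₂ : List Fm) (A C : Fm) :
      BangL (Δ₁ ++ bang A :: (Γ ++ Δ₂)) C → BangL (Δ₁ ++ Γ ++ bang A :: Δ₂) C
  | perm2 (Δ₁ Γ Δ₂ : List Fm) (A C : Fm) :
      BangL (Δ₁ ++ Γ ++ bang A :: Δ₂) C → BangL (Δ₁ ++ bang A :: (Γ ++ Δ₂)) C
  | contr (Δ₁ Δ₂ : List Fm) (A C : Fm) :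
      BangL (Δ₁ ++ bang A :: bang A :: Δ₂) C → BangL (Δ₁ ++ bang A :: Δ₂) C

/-- G_R: the formula (r/q)/p for each (B₁)-rule and r/(p/q) for each (B₂)-rule of R. -/
def GRset (R : Finset BRule) : Set Fm :=
  {F | ∃ p q r : ℕ,
    (BRule.b1 p q r ∈ R ∧ F = div (div (var r) (var q)) (var p)) ∨
    (BRule.b2 p q r ∈ R ∧ F = div (var r) (div (var p) (var q)))}

section Aux
open Fm

/-- Move a block of !-formulas leftwards across Γ. -/
lemma bangl_moveL (L : List Fm) (E Γ Δ : List Fm) (C : Fm)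
    (h : BangL (E ++ Γ ++ L.map bang ++ Δ) C) :
    BangL (E ++ L.map bang ++ Γ ++ Δ) C := by
  induction L generalizing E with
  | nil => simpa using h
  | cons x T ih =>
    have h1 := BangL.perm2 E Γ (T.map bang ++ Δ) x C (by simpa using h)
    have h2 := ih (E ++ [bang x]) (by simpa using h1)
    simpa using h2

/-- Move a block of !-formulas rightwards across Γ. -/
lemma bangl_moveR (L : List Fm) (E Γ Δ : List Fm) (C : Fm)
    (h : BangL (E ++ L.map bang ++ Γ ++ Δ) C) :
    BangL (E ++ Γ ++ L.map bang ++ Δ) C := by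
  induction L generalizing E with
  | nil => simpa using h
  | cons x T ih =>
    have h2 := ih (E ++ [bang x]) (by simpa using h)
    -- h2 : (E ++ [bang x]) ++ Γ ++ T.map bang ++ Δ
    have h3 := BangL.perm1 E Γ (T.map bang ++ Δ) x C (by simpa using h2)
    simpa using h3

/-- Permute a block of !-formulas. -/
lemma bangl_permPrefix {L L' : List Fm} (hp : L.Perm L') :
    ∀ E Φ C, BangL (E ++ L.map bang ++ Φ) C → BangL (E ++ L'.map bang ++ Φ) C := by
  induction hp with
  | nil => intro E Φ C h; exact h
  | cons a _ ih =>
    intro E Φ C h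
    have := ih (E ++ [bang a]) Φ C (by simpa using h)
    simpa using this
  | swap x y l =>
    intro E Φ C h
    have := BangL.perm2 E [bang y] (l.map bang ++ Φ) x C (by simpa using h)
    simpa using this
  | trans _ _ ih1 ih2 => intro E Φ C h; exact ih2 E Φ C (ih1 E Φ C h)

/-- Contract a block of !-formulas down to a duplicate-free block. -/
lemma bangl_nodup : ∀ (n : ℕ) (L : List Fm), L.length ≤ n →
    ∀ E Φ C, BangL (E ++ L.map bang ++ Φ) C →
    ∃ M : List Fm, M.Nodup ∧ M.toFinset = L.toFinset ∧ BangL (E ++ M.map bang ++ Φ) C := by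
  intro n
  induction n with
  | zero =>
    intro L hL E Φ C h
    have : L = [] := List.length_eq_zero_iff.mp (Nat.le_zero.mp hL)
    subst this
    exact ⟨[], List.nodup_nil, rfl, h⟩
  | succ n ih =>
    intro L hL E Φ C h
    match L, hL with
    | [], _ => exact ⟨[], List.nodup_nil, rfl, h⟩
    | x :: T, hL =>
      by_cases hx : x ∈ T
      · obtain ⟨T₁, T₂, rfl⟩ := List.append_of_mem hx
        have h1 := BangL.perm2 (E ++ [bang x]) (T₁.map bang) (T₂.map bang ++ Φ) x C
          (by simpa using h)
        have h2 := BangL.contr E (T₁.map bang ++ T₂.map bang ++ Φ) x C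
          (by simpa using h1)
        have hlen : (x :: (T₁ ++ T₂)).length ≤ n := by
          simp only [List.length_cons, List.length_append] at hL ⊢
          omega
        obtain ⟨M, hM1, hM2, hM3⟩ := ih (x :: (T₁ ++ T₂)) hlen E Φ C (by simpa using h2)
        refine ⟨M, hM1, ?_, hM3⟩
        rw [hM2]
        ext a
        by_cases hax : a = x <;> simp [hax]
      · obtain ⟨M, hM1, hM2, hM3⟩ := ih T (by simpa using Nat.le_of_succ_le_succ hL)
          (E ++ [bang x]) Φ C (by simpa using h)
        have hxM : x ∉ M := by
          intro hmem
          exact hx (by rwa [← List.mem_toFinset, hM2, List.mem_toFinset] at hmem)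
        exact ⟨x :: M, List.nodup_cons.mpr ⟨hxM, hM1⟩,
          by simp [List.toFinset_cons, hM2], by simpa using hM3⟩
lemma main_aux (R : Finset BRule) (Φ : List Fm) (A : Fm) (h : LStarR R Φ A) :
    ∃ L : List Fm, (∀ x ∈ L, x ∈ GRset R) ∧ BangL (L.map bang ++ Φ) A := by
  induction h with
  | ax A => exact ⟨[], by simp, BangL.ax A⟩
  | divL Γ Δ₁ Δ₂ A B C h1 h2 ih1 ih2 =>
    obtain ⟨L₁, hL₁, d₁⟩ := ih1
    obtain ⟨L₂, hL₂, d₂⟩ := ih2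
    refine ⟨L₁ ++ L₂, ?_, ?_⟩
    · intro x hx; rcases List.mem_append.mp hx with hh | hh
      exacts [hL₁ x hh, hL₂ x hh]
    · have hd := BangL.divL (L₁.map bang ++ Γ) (L₂.map bang ++ Δ₁) Δ₂ A B C d₁
        (by simpa using d₂)
      have := bangl_moveL L₁ [] (L₂.map bang ++ Δ₁ ++ [div B A]) (Γ ++ Δ₂) C
        (by simpa using hd)
      simpa using this
  | divR Γ A B h1 ih =>
    obtain ⟨L, hL, d⟩ := ih
    exact ⟨L, hL, BangL.divR (L.map bang ++ Γ) A B (by simpa using d)⟩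
  | ldivL Γ Δ₁ Δ₂ A B C h1 h2 ih1 ih2 =>
    obtain ⟨L₁, hL₁, d₁⟩ := ih1
    obtain ⟨L₂, hL₂, d₂⟩ := ih2
    refine ⟨L₁ ++ L₂, ?_, ?_⟩
    · intro x hx; rcases List.mem_append.mp hx with hh | hh
      exacts [hL₁ x hh, hL₂ x hh]
    · have hd := BangL.ldivL (L₁.map bang ++ Γ) (L₂.map bang ++ Δ₁) Δ₂ A B C d₁
        (by simpa using d₂)
      have := bangl_moveL L₁ [] (L₂.map bang ++ Δ₁) (Γ ++ ldiv A B :: Δ₂) C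
        (by simpa using hd)
      simpa using this
  | ldivR Γ A B h1 ih =>
    obtain ⟨L, hL, d⟩ := ih
    have hm := bangl_moveR L [] [A] Γ B (by simpa using d)
    exact ⟨L, hL, BangL.ldivR (L.map bang ++ Γ) A B (by simpa using hm)⟩
  | b1 p q r Φ₁ Φ₂ hmem h1 h2 ih1 ih2 =>
    obtain ⟨L₁, hL₁, d₁⟩ := ih1
    obtain ⟨L₂, hL₂, d₂⟩ := ih2
    refine ⟨div (div (var r) (var q)) (var p) :: (L₁ ++ L₂), ?_, ?_⟩
    · intro x hx
      rcases List.mem_cons.mp hx with hh | hh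
      · exact ⟨p, q, r, Or.inl ⟨hmem, hh⟩⟩
      · rcases List.mem_append.mp hh with hh | hh
        exacts [hL₁ x hh, hL₂ x hh]
    · have s1 := BangL.divL (L₂.map bang ++ Φ₂) [] [] (var q) (var r) (var r) d₂
        (by simpa using BangL.ax (var r))
      have s2 := BangL.divL (L₁.map bang ++ Φ₁) [] (L₂.map bang ++ Φ₂) (var p)
        (div (var r) (var q)) (var r) d₁ (by simpa using s1)
      have s3 := BangL.bangL [] (L₁.map bang ++ Φ₁ ++ (L₂.map bang ++ Φ₂))
        (div (div (var r) (var q)) (var p)) (var r) (by simpa using s2)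
      have s4 := bangl_moveL L₂ (bang (div (div (var r) (var q)) (var p)) :: L₁.map bang)
        Φ₁ Φ₂ (var r) (by simpa using s3)
      simpa using s4
  | b2 p q r Φ' hmem h1 ih =>
    obtain ⟨L, hL, d⟩ := ih
    refine ⟨div (var r) (div (var p) (var q)) :: L, ?_, ?_⟩
    · intro x hx
      rcases List.mem_cons.mp hx with hh | hh
      · exact ⟨p, q, r, Or.inr ⟨hmem, hh⟩⟩
      · exact hL x hh
    · have s1 := BangL.divR (L.map bang ++ Φ') (var q) (var p) (by simpa using d)
      have s2 := BangL.divL (L.map bang ++ Φ') [] [] (div (var p) (var q)) (var r) (var r)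
        s1 (by simpa using BangL.ax (var r))
      have s3 := BangL.bangL [] (L.map bang ++ Φ')
        (div (var r) (div (var p) (var q))) (var r) (by simpa using s2)
      simpa using s3


/-- If L* + R derives Φ → A then there is a finite B ⊆ G_R with !B, Φ → A derivable in !L*. -/
theorem stmt8 (R : Finset BRule) (Φ : List Fm) (A : Fm)
    (h : LStarR R Φ A) :
    ∃ B : Finset Fm, ↑B ⊆ GRset R ∧ BangL (B.toList.map bang ++ Φ) A := by
  obtain ⟨L, hL, d⟩ := main_aux R Φ A h
  obtain ⟨M, hM1, hM2, hM3⟩ := bangl_nodup L.length L le_rfl [] Φ A (by simpa using d)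
  refine ⟨L.toFinset, ?_, ?_⟩
  · intro x hx
    exact hL x (List.mem_toFinset.mp hx)
  · have hp : M.Perm L.toFinset.toList :=
      List.perm_of_nodup_nodup_toFinset_eq hM1 (Finset.nodup_toList _)
        (by rw [Finset.toList_toFinset]; exact hM2)
    have := bangl_permPrefix hp [] Φ A (by simpa using hM3)
    simpa using this

end Aux
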